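/- arXiv:2010.08972 — 5 statements merged into one kernel-verified Lean document; each statement's English description precedes it below -/
import Mathlib

section
/- Let (X_n)_{n∈Z^d} be i.i.d. with all moments finite, and β, γ finitely supported multi-indices. Then lim_{L→∞} (2L+1)^{−d} Cov( Σ_{i∈Λ_L^d} X^{β^i}, Σ_{i∈Λ_L^d} X^{γ^i} ) = Σ_{j∈Z^d} Cov(X^β, X^{γ^j}), where Λ_L^d = ([−L,L]∩Z)^d and the right-hand sum is finite. -/
/-!
By independence, `E[X^δ]` is the product over `n` of the moments `E[X_n ^ δ_n]`, and by identical
distribution this product does not change when `δ` is shifted. Hence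
`Cov(X^{β^i}, X^{γ^{i'}}) = c (i' - i)` with `c j = Cov(X^β, X^{γ^j})`, and `c j = 0` unless the
supports of `β` and `γ^j` meet, i.e. unless `j ∈ supp β - supp γ`. Bilinearity turns the covariance
of the two sums into `∑ j, #{i ∈ Λ_L | i + j ∈ Λ_L} • c j`, a finite sum in which each count is
`∏ k, (2L + 1 - |j k|)` for large `L`; divided by `(2L + 1)^d`, every coefficient tends to `1`.
-/

open MeasureTheory ProbabilityTheory Filter Topology Finset
open scoped Pointwise

/-- The cube `Λ_L^d = ([-L,L] ∩ ℤ)^d` as a finset of `ℤ^d`. -/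
noncomputable def cubeF (d L : ℕ) : Finset (Fin d → ℤ) :=
  Fintype.piFinset fun _ : Fin d => Finset.Icc (-(L : ℤ)) (L : ℤ)

section IndepProd

variable {Ω ι : Type*} [MeasurableSpace Ω] {μ : Measure Ω} {X : ι → Ω → ℝ}

lemma ProbabilityTheory.iIndepFun.integrable_fun_finsetProd (hX : iIndepFun X μ)
    (hmeas : ∀ i, Measurable (X i)) (hint : ∀ i, Integrable (X i) μ) (s : Finset ι) :
    Integrable (fun ω => ∏ i ∈ s, X i ω) μ := by
  classical
  have := hX.isProbabilityMeasure
  induction s using Finset.induction_on with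
  | empty => simp
  | insert a s ha ih =>
    simp_rw [Finset.prod_insert ha]
    have hindep : IndepFun (X a) (∏ i ∈ s, X i) μ :=
      (hX.indepFun_finsetProd_of_notMem hmeas ha).symm
    have hprod : Integrable (∏ i ∈ s, X i) μ := by simpa only [← Finset.prod_apply] using ih
    simpa only [Pi.mul_def, Finset.prod_apply] using hindep.integrable_mul (hint a) hprod

lemma ProbabilityTheory.iIndepFun.integral_fun_finsetProd (hX : iIndepFun X μ)
    (hmeas : ∀ i, AEStronglyMeasurable (X i) μ) (s : Finset ι) :
    ∫ ω, ∏ i ∈ s, X i ω ∂μ = ∏ i ∈ s, ∫ ω, X i ω ∂μ := by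
  simp_rw [← Finset.prod_coe_sort s]
  exact (hX.precomp Subtype.val_injective).integral_fun_prod_eq_prod_integral fun i => hmeas i

end IndepProd

namespace MultiIndex

section Shift

variable {G : Type*} [AddCommGroup G]

/-- `shift i δ` is the paper's `δ^i`: `(shift i δ) (n + i) = δ n`. -/
noncomputable def shift (i : G) (δ : G →₀ ℕ) : G →₀ ℕ :=
  δ.mapDomain (· + i)

lemma prod_shift {N : Type*} [CommMonoid N] (h : G → ℕ → N) (i : G) (δ : G →₀ ℕ) :
    (shift i δ).prod h = δ.prod fun n k => h (n + i) k :=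
  Finsupp.prod_mapDomain_index_inj (add_left_injective i)

lemma support_shift [DecidableEq G] (i : G) (δ : G →₀ ℕ) :
    (shift i δ).support = δ.support.image (· + i) :=
  Finsupp.mapDomain_support_of_injective (add_left_injective i) δ

lemma shift_add (i : G) (δ ε : G →₀ ℕ) : shift i (δ + ε) = shift i δ + shift i ε :=
  Finsupp.mapDomain_add

lemma shift_shift (i k : G) (δ : G →₀ ℕ) : shift i (shift k δ) = shift (k + i) δ := by
  simp only [shift, ← Finsupp.mapDomain_comp]
  congr 1
  funext n
  simp [add_assoc]

end Shift

section Monomial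

variable {ι Ω : Type*}

noncomputable def monomial (X : ι → Ω → ℝ) (δ : ι →₀ ℕ) (ω : Ω) : ℝ :=
  δ.prod fun n k => X n ω ^ k

lemma monomial_def (X : ι → Ω → ℝ) (δ : ι →₀ ℕ) (ω : Ω) :
    monomial X δ ω = ∏ n ∈ δ.support, X n ω ^ δ n := rfl

lemma monomial_add (X : ι → Ω → ℝ) (δ ε : ι →₀ ℕ) :
    monomial X (δ + ε) = monomial X δ * monomial X ε :=
  funext fun _ => Finsupp.prod_add_index' (fun _ => pow_zero _) fun _ _ _ => pow_add _ _ _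

lemma monomial_shift {G : Type*} [AddCommGroup G] (X : G → Ω → ℝ) (i : G) (δ : G →₀ ℕ)
    (ω : Ω) : monomial X (shift i δ) ω = ∏ n ∈ δ.support, X (n + i) ω ^ δ n :=
  prod_shift _ i δ

variable [MeasurableSpace Ω] {μ : Measure Ω} {X : ι → Ω → ℝ}

lemma measurable_monomial (hmeas : ∀ n, Measurable (X n)) (δ : ι →₀ ℕ) :
    Measurable (monomial X δ) :=
  Finset.measurable_fun_prod _ fun n _ => (hmeas n).pow_const _

lemma integral_monomial (hindep : iIndepFun X μ) (hmeas : ∀ n, Measurable (X n))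
    (δ : ι →₀ ℕ) : ∫ ω, monomial X δ ω ∂μ = δ.prod fun n k => ∫ ω, X n ω ^ k ∂μ :=
  (hindep.comp (fun n x => x ^ δ n) fun _ => measurable_id.pow_const _).integral_fun_finsetProd
    (fun n => ((hmeas n).pow_const _).aestronglyMeasurable) δ.support

lemma integrable_monomial (hindep : iIndepFun X μ) (hmeas : ∀ n, Measurable (X n))
    (hmom : ∀ n k, Integrable (fun ω => |X n ω| ^ k) μ) (δ : ι →₀ ℕ) :
    Integrable (monomial X δ) μ := by
  have hpow : ∀ n k, Integrable (fun ω => X n ω ^ k) μ := fun n k =>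
    (hmom n k).mono' ((hmeas n).pow_const k).aestronglyMeasurable
      (ae_of_all _ fun ω => by rw [Real.norm_eq_abs, abs_pow])
  exact (hindep.comp (fun n x => x ^ δ n) fun _ => measurable_id.pow_const _)
    |>.integrable_fun_finsetProd (fun n => (hmeas n).pow_const _) (fun n => hpow n _) δ.support

lemma memLp_two_monomial (hindep : iIndepFun X μ) (hmeas : ∀ n, Measurable (X n))
    (hmom : ∀ n k, Integrable (fun ω => |X n ω| ^ k) μ) (δ : ι →₀ ℕ) :
    MemLp (monomial X δ) 2 μ :=
  (memLp_two_iff_integrable_sq (measurable_monomial hmeas δ).aestronglyMeasurable).2 <| by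
    simpa only [monomial_add, Pi.mul_def, sq] using integrable_monomial hindep hmeas hmom (δ + δ)

end Monomial

section Stationary

variable {G Ω : Type*} [AddCommGroup G] [MeasurableSpace Ω] {μ : Measure Ω} {X : G → Ω → ℝ}

lemma integral_monomial_shift (hindep : iIndepFun X μ) (hmeas : ∀ n, Measurable (X n))
    (hid : ∀ n m, μ.map (X n) = μ.map (X m)) (i : G) (δ : G →₀ ℕ) :
    ∫ ω, monomial X (shift i δ) ω ∂μ = ∫ ω, monomial X δ ω ∂μ := by
  rw [integral_monomial hindep hmeas, integral_monomial hindep hmeas, prod_shift]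
  congr 1
  funext n k
  exact (IdentDistrib.comp ⟨(hmeas _).aemeasurable, (hmeas n).aemeasurable, hid _ n⟩
    (measurable_id.pow_const k)).integral_eq

lemma covariance_monomial_shift_shift [IsProbabilityMeasure μ] (hindep : iIndepFun X μ)
    (hmeas : ∀ n, Measurable (X n)) (hid : ∀ n m, μ.map (X n) = μ.map (X m))
    (hmom : ∀ n k, Integrable (fun ω => |X n ω| ^ k) μ) (β γ : G →₀ ℕ) (i i' : G) :
    cov[monomial X (shift i β), monomial X (shift i' γ); μ] =
      cov[monomial X β, monomial X (shift (i' - i) γ); μ] := by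
  have hL2 := memLp_two_monomial hindep hmeas hmom
  have hcommon : shift i β + shift i' γ = shift i (β + shift (i' - i) γ) := by
    rw [shift_add, shift_shift, sub_add_cancel]
  simp only [covariance_eq_sub (hL2 _) (hL2 _), ← monomial_add, hcommon,
    integral_monomial_shift hindep hmeas hid]

lemma covariance_monomial_shift_eq_zero [DecidableEq G] [IsProbabilityMeasure μ]
    (hindep : iIndepFun X μ) (hmeas : ∀ n, Measurable (X n))
    (hmom : ∀ n k, Integrable (fun ω => |X n ω| ^ k) μ)
    {β γ : G →₀ ℕ} {j : G} (hj : j ∉ β.support - γ.support) :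
    cov[monomial X β, monomial X (shift j γ); μ] = 0 := by
  have hdisj : Disjoint β.support (shift j γ).support := by
    rw [support_shift, Finset.disjoint_left]
    intro n hn hn'
    obtain ⟨m, hm, rfl⟩ := Finset.mem_image.mp hn'
    exact hj (by simpa using Finset.sub_mem_sub hn hm)
  have hL2 := memLp_two_monomial hindep hmeas hmom
  rw [covariance_eq_sub (hL2 _) (hL2 _), ← monomial_add, integral_monomial hindep hmeas,
    Finsupp.prod_add_index_of_disjoint hdisj, integral_monomial hindep hmeas,
    integral_monomial hindep hmeas, sub_self]

lemma integral_sum_mul_sum_sub_eq_sum_sum_covariance [IsProbabilityMeasure μ]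
    (hindep : iIndepFun X μ) (hmeas : ∀ n, Measurable (X n))
    (hid : ∀ n m, μ.map (X n) = μ.map (X m)) (hmom : ∀ n k, Integrable (fun ω => |X n ω| ^ k) μ)
    (β γ : G →₀ ℕ) (Λ : Finset G) :
    ∫ ω, (∑ i ∈ Λ, monomial X (shift i β) ω) * (∑ i ∈ Λ, monomial X (shift i γ) ω) ∂μ -
        (∫ ω, ∑ i ∈ Λ, monomial X (shift i β) ω ∂μ) *
          (∫ ω, ∑ i ∈ Λ, monomial X (shift i γ) ω ∂μ) =
      ∑ i ∈ Λ, ∑ i' ∈ Λ, cov[monomial X β, monomial X (shift (i' - i) γ); μ] := by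
  have hL2 := memLp_two_monomial hindep hmeas hmom
  have hsum := fun δ : G →₀ ℕ => memLp_finsetSum Λ fun i _ => hL2 (shift i δ)
  simp_rw [← covariance_monomial_shift_shift hindep hmeas hid hmom]
  rw [← covariance_fun_sum_fun_sum' (fun i _ => hL2 _) (fun i _ => hL2 _),
    covariance_eq_sub (hsum β) (hsum γ)]
  rfl

end Stationary

end MultiIndex

lemma sum_sum_sub_eq_sum_card_smul {G M : Type*} [AddCommGroup G] [DecidableEq G]
    [AddCommMonoid M] (Λ S : Finset G) {c : G → M} (hc : ∀ j ∉ S, c j = 0) :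
    ∑ i ∈ Λ, ∑ i' ∈ Λ, c (i' - i) = ∑ j ∈ S, #{i ∈ Λ | i + j ∈ Λ} • c j := by
  have hdiff : ∀ i i', c (i' - i) = ∑ j ∈ S, if i' = i + j then c j else 0 := by
    intro i i'
    simp only [← sub_eq_iff_eq_add', Finset.sum_ite_eq]
    split_ifs with h
    · rfl
    · exact hc _ h
  calc ∑ i ∈ Λ, ∑ i' ∈ Λ, c (i' - i)
      = ∑ i ∈ Λ, ∑ j ∈ S, ∑ i' ∈ Λ, if i' = i + j then c j else 0 := by
        simp_rw [hdiff]
        exact Finset.sum_congr rfl fun _ _ => Finset.sum_comm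
    _ = ∑ j ∈ S, ∑ i ∈ Λ, if i + j ∈ Λ then c j else 0 := by
        simp_rw [Finset.sum_ite_eq']
        exact Finset.sum_comm
    _ = ∑ j ∈ S, #{i ∈ Λ | i + j ∈ Λ} • c j := by
        simp_rw [← Finset.sum_filter, Finset.sum_const]

lemma card_filter_add_mem_Icc (L : ℕ) (a : ℤ) :
    #{x ∈ Icc (-(L : ℤ)) L | x + a ∈ Icc (-(L : ℤ)) L} = (2 * (L : ℤ) + 1 - |a|).toNat := by
  have hinter : {x ∈ Icc (-(L : ℤ)) L | x + a ∈ Icc (-(L : ℤ)) L} =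
      Icc (max (-(L : ℤ)) (-L - a)) (min (L : ℤ) (L - a)) := by
    ext x
    simp only [Finset.mem_filter, Finset.mem_Icc, max_le_iff, le_min_iff]
    omega
  rw [hinter, Int.card_Icc]
  congr 1
  rcases le_total 0 a with ha | ha
  · rw [abs_of_nonneg ha, max_eq_left (by omega), min_eq_right (by omega)]
    ring
  · rw [abs_of_nonpos ha, max_eq_right (by omega), min_eq_left (by omega)]
    ring

lemma tendsto_card_filter_add_mem_Icc_div (a : ℤ) :
    Tendsto (fun L : ℕ => (#{x ∈ Icc (-(L : ℤ)) L | x + a ∈ Icc (-(L : ℤ)) L} : ℝ) / (2 * L + 1))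
      atTop (𝓝 1) := by
  have hlen : Tendsto (fun L : ℕ => 2 * (L : ℝ) + 1) atTop atTop :=
    tendsto_atTop_add_const_right _ _ (tendsto_natCast_atTop_atTop.const_mul_atTop two_pos)
  have hlim : Tendsto (fun L : ℕ => 1 - (|a| : ℝ) / (2 * L + 1)) atTop (𝓝 1) := by
    simpa using tendsto_const_nhds.sub (tendsto_const_nhds.div_atTop hlen)
  refine hlim.congr' ?_
  filter_upwards [eventually_ge_atTop |a|.toNat] with L hL
  have hpos : (0 : ℝ) < 2 * L + 1 := by positivity
  have hcard : (((2 * (L : ℤ) + 1 - |a|).toNat : ℤ) : ℝ) = 2 * L + 1 - |(a : ℝ)| := by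
    rw [Int.toNat_of_nonneg (by omega)]
    push_cast
    ring
  rw [Int.cast_natCast] at hcard
  rw [card_filter_add_mem_Icc, hcard]
  field_simp

lemma card_filter_add_mem_cubeF (d L : ℕ) (j : Fin d → ℤ) :
    #{i ∈ cubeF d L | i + j ∈ cubeF d L} =
      ∏ k, #{x ∈ Icc (-(L : ℤ)) L | x + j k ∈ Icc (-(L : ℤ)) L} := by
  have hpi : {i ∈ cubeF d L | i + j ∈ cubeF d L} = Fintype.piFinset fun k =>
      {x ∈ Icc (-(L : ℤ)) L | x + j k ∈ Icc (-(L : ℤ)) L} := by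
    ext i
    simp only [cubeF, Finset.mem_filter, Fintype.mem_piFinset, Pi.add_apply, forall_and]
  rw [hpi, Fintype.card_piFinset]

lemma tendsto_card_filter_add_mem_cubeF_div (d : ℕ) (j : Fin d → ℤ) :
    Tendsto (fun L : ℕ => (#{i ∈ cubeF d L | i + j ∈ cubeF d L} : ℝ) / (2 * L + 1) ^ d)
      atTop (𝓝 1) := by
  have hprod := tendsto_finsetProd Finset.univ fun k _ => tendsto_card_filter_add_mem_Icc_div (j k)
  rw [Finset.prod_const_one] at hprod
  refine hprod.congr fun L => ?_
  rw [card_filter_add_mem_cubeF, Finset.prod_div_distrib, Finset.prod_const, Finset.card_univ,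
    Fintype.card_fin]
  push_cast
  rfl

lemma tendsto_sum_cubeF_sub_div {d : ℕ} (c : (Fin d → ℤ) → ℝ) (S : Finset (Fin d → ℤ))
    (hc : ∀ j ∉ S, c j = 0) :
    Tendsto (fun L : ℕ => (∑ i ∈ cubeF d L, ∑ i' ∈ cubeF d L, c (i' - i)) / (2 * L + 1) ^ d)
      atTop (𝓝 (∑' j, c j)) := by
  rw [tsum_eq_sum hc]
  simp_rw [sum_sum_sub_eq_sum_card_smul _ S hc, nsmul_eq_mul, Finset.sum_div, mul_div_right_comm]
  exact tendsto_finsetSum S fun j _ => by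
    simpa using (tendsto_card_filter_add_mem_cubeF_div d j).mul_const (c j)

open MultiIndex

/-- For i.i.d. `(X_n)_{n∈ℤ^d}` with all moments finite and finitely supported multi-indices
`β, γ`:
`lim_{L→∞} (2L+1)^{-d} Cov(Σ_{i∈Λ_L^d} X^{β^i}, Σ_{i∈Λ_L^d} X^{γ^i}) = Σ_{j∈ℤ^d} Cov(X^β, X^{γ^j})`,
where `X^{β^i} = ∏_n X_{n+i}^{β_n}`. -/
theorem cov_sums_tendsto {d : ℕ} {Ω : Type*} [MeasurableSpace Ω]
    (μ : Measure Ω) [IsProbabilityMeasure μ]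
    (X : (Fin d → ℤ) → Ω → ℝ) (hmeas : ∀ n, Measurable (X n))
    (hindep : iIndepFun X μ)
    (hid : ∀ n m, μ.map (X n) = μ.map (X m))
    (hmom : ∀ n k, Integrable (fun ω => |X n ω| ^ k) μ)
    (β γ : (Fin d → ℤ) →₀ ℕ) :
    Tendsto (fun L : ℕ =>
      ((∫ ω, (∑ i ∈ cubeF d L, ∏ n ∈ β.support, X (n + i) ω ^ β n) *
            (∑ i ∈ cubeF d L, ∏ n ∈ γ.support, X (n + i) ω ^ γ n) ∂μ) -
        (∫ ω, ∑ i ∈ cubeF d L, ∏ n ∈ β.support, X (n + i) ω ^ β n ∂μ) *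
          (∫ ω, ∑ i ∈ cubeF d L, ∏ n ∈ γ.support, X (n + i) ω ^ γ n ∂μ)) /
        (2 * (L : ℝ) + 1) ^ d)
      atTop
      (nhds (∑' j : Fin d → ℤ,
        ((∫ ω, (∏ n ∈ β.support, X n ω ^ β n) * (∏ n ∈ γ.support, X (n + j) ω ^ γ n) ∂μ) -
          (∫ ω, ∏ n ∈ β.support, X n ω ^ β n ∂μ) *
            (∫ ω, ∏ n ∈ γ.support, X (n + j) ω ^ γ n ∂μ)))) := by
  have hL2 := memLp_two_monomial hindep hmeas hmom
  have hcov : ∀ j, ∫ ω, monomial X β ω * monomial X (shift j γ) ω ∂μ -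
      (∫ ω, monomial X β ω ∂μ) * ∫ ω, monomial X (shift j γ) ω ∂μ =
        cov[monomial X β, monomial X (shift j γ); μ] := fun j =>
    (covariance_eq_sub (hL2 _) (hL2 _)).symm
  simp only [← monomial_shift, ← monomial_def X β, hcov,
    integral_sum_mul_sum_sub_eq_sum_sum_covariance hindep hmeas hid hmom]
  exact tendsto_sum_cubeF_sub_div (fun j => cov[monomial X β, monomial X (shift j γ); μ])
    (β.support - γ.support) fun j hj => covariance_monomial_shift_eq_zero hindep hmeas hmom hj
end

section
/- Let H_L be the truncation of the Anderson operator H = Δ + V to Λ_L^d, where V has i.i.d. potential values (X_n). For a nonzero multi-index β, let a^k_L(β) be the coefficient of the monomial X^β in Tr(H_L^k), viewed as a polynomial in the variables (X_n). Then: (1) 0 ≤ a^k_L(β) ≤ p^k(β), where p^k(β) is the number of balanced strings s in S^k with φ(s)^i = β for some i; (2) if β_n > 0 for some n ∈ Λ_{L−k}^d, then a^k_L(β) = p^k(β); (3) if β_n > 0 for some n ∉ Λ_L^d, then a^k_L(β) = 0. -/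
/-- The alphabet `S = {V, U_1, ..., U_d, D_1, ..., D_d}`: `none` is `V`,
`some (v, true)` is `U_v`, `some (v, false)` is `D_v`. -/
abbrev ASym (d : ℕ) := Option (Fin d × Bool)

/-- The step in `ℤ^d` associated to a symbol. -/
def step {d : ℕ} : ASym d → (Fin d → ℤ)
  | none => 0
  | some (v, true) => Pi.single v 1
  | some (v, false) => -(Pi.single v 1)

/-- The walk `y_j(s)` associated to a string `s ∈ S^k`, starting at `0`. -/
def walk {d k : ℕ} (s : Fin k → ASym d) (j : ℕ) : Fin d → ℤ :=
  ∑ i ∈ Finset.range j, if h : i < k then step (s ⟨i, h⟩) else 0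
/-- The multi-index `φ(s)`: `φ(s)_n = #{1 ≤ j ≤ k : y_j(s) = y_{j-1}(s) = n}`. -/
def phi {d k : ℕ} (s : Fin k → ASym d) (n : Fin d → ℤ) : ℕ :=
  (Finset.univ.filter fun j : Fin k =>
    walk s ((j : ℕ) + 1) = n ∧ walk s (j : ℕ) = n).card

/-- The indicator multi-index `δ^i` of the point `i ∈ ℤ^d`. -/
def deltaIdx {d : ℕ} (i : Fin d → ℤ) (n : Fin d → ℤ) : ℕ :=
  if n = i then 1 else 0
open Classical in
/-- `p^k(β)`: the number of balanced strings `s ∈ S^k` with `φ(s)^i = β` for some `i ∈ ℤ^d`,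
i.e. `β_n = φ(s)_{n-i}` for all `n`. -/
noncomputable def pathCount (d k : ℕ) (β : (Fin d → ℤ) → ℕ) : ℕ :=
  (Finset.univ.filter fun s : Fin k → ASym d =>
    walk s k = 0 ∧ ∃ i : Fin d → ℤ, ∀ n, β n = phi s (n - i)).card

/-- The cube `Λ_L^d = ([-L,L] ∩ ℤ)^d`, as an index type. -/
abbrev Cube (d L : ℕ) := Fin d → (Finset.Icc (-(L : ℤ)) (L : ℤ))

/-- The truncated Anderson operator `H_L = 1_{Λ_L^d} (Δ + V) 1_{Λ_L^d}` as a matrix over the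
polynomial ring in the potential variables `X_n`, `n ∈ ℤ^d`. -/
noncomputable def andersonM (d L : ℕ) :
    Matrix (Cube d L) (Cube d L) (MvPolynomial (Fin d → ℤ) ℝ) := fun n m =>
  (if (∑ v : Fin d, |((n v : ℤ) - (m v : ℤ))|) = 1 then 1 else 0) +
  (if n = m then MvPolynomial.X (fun v => (n v : ℤ)) else 0)

/-- `Tr(H_L^k)` as a polynomial in the variables `X_n`. -/
noncomputable def trHpow (d L k : ℕ) : MvPolynomial (Fin d → ℤ) ℝ :=
  Matrix.trace (andersonM d L ^ k)

/-!
Write `H_L = ∑_a T_a`, where `T_a` moves by the letter `a` and carries the weight `X_n` for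
`a = V`. Expanding `Tr(H_L^k)` then shows that `a^k_L(β)` counts the pairs `(n, s)` of a start
point `n ∈ Λ_L` and a balanced string `s` whose walk from `n` stays in `Λ_L` and has
`φ(s)^n = β`. Forgetting `n` maps these pairs injectively to the strings counted by `p^k(β)`:
for `β ≠ 0` the translation `n` is determined by the first moment `∑_m β_m m = |β| n + const`.
If `supp β` meets `Λ_{L-k}`, each of these walks passes through that site and, having length
`k`, stays in `Λ_L`, so the map is onto; if `supp β` leaves `Λ_L`, no walk inside `Λ_L` can
produce it, so there are no pairs.
-/

section

open Finset MvPolynomial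
open scoped Classical

variable {d k : ℕ}

lemma sum_pi_fin_succ {α M : Type*} [Fintype α] [AddCommMonoid M] (f : (Fin (k + 1) → α) → M) :
    ∑ s, f s = ∑ a, ∑ s : Fin k → α, f (Fin.cons a s) := by
  rw [← (Fin.consEquiv fun _ => α).sum_comp, Fintype.sum_prod_type]
  rfl

lemma step_some_apply (v : Fin d) (b : Bool) (w : Fin d) :
    step (some (v, b)) w = if w = v then (if b then 1 else -1) else 0 := by
  rcases b <;> simp [step, Pi.single_apply, apply_ite]

lemma abs_step_apply_le (a : ASym d) (v : Fin d) : |step a v| ≤ 1 := by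
  rcases a with _ | ⟨w, b⟩
  · simp [step]
  · rw [step_some_apply]
    rcases b with _ | _ <;> split_ifs <;> simp

lemma step_some_ne_zero (a : Fin d × Bool) : step (some a) ≠ 0 := fun h => by
  have := congrFun h a.1
  rcases a with ⟨v, _ | _⟩ <;> simp [step_some_apply] at this

lemma step_some_injective : Function.Injective fun a : Fin d × Bool => step (some a) := by
  rintro ⟨v, b⟩ ⟨w, c⟩ h
  have hv := congrFun h v
  simp only [step_some_apply] at hv
  by_cases hvw : v = w
  · subst hvw
    rcases b with _ | _ <;> rcases c with _ | _ <;> simp_all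
  · rcases b with _ | _ <;> simp [hvw] at hv

lemma sum_abs_eq_one_iff_exists_eq_step (x : Fin d → ℤ) :
    ∑ v, |x v| = 1 ↔ ∃ a : Fin d × Bool, x = step (some a) := by
  constructor
  · intro h
    obtain ⟨v, hv⟩ : ∃ v, x v ≠ 0 := by
      by_contra! hc
      simp [hc] at h
    have hsplit := Finset.add_sum_erase univ (fun w => |x w|) (mem_univ v)
    have hrest_nonneg : 0 ≤ ∑ w ∈ univ.erase v, |x w| := sum_nonneg fun w _ => abs_nonneg _
    have hxv : |x v| = 1 := by have := Int.one_le_abs hv; omega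
    have hrest : ∀ w ≠ v, x w = 0 := fun w hw => abs_eq_zero.1 <|
      (sum_eq_zero_iff_of_nonneg fun w _ => abs_nonneg (x w)).1 (by omega) w
        (mem_erase.2 ⟨hw, mem_univ w⟩)
    rcases abs_eq zero_le_one |>.1 hxv with h1 | h1
    · refine ⟨(v, true), funext fun w => ?_⟩
      rw [step_some_apply]
      split_ifs with hw <;> simp_all
    · refine ⟨(v, false), funext fun w => ?_⟩
      rw [step_some_apply]
      split_ifs with hw <;> simp_all
  · rintro ⟨⟨v, b⟩, rfl⟩
    simp only [step_some_apply]
    rcases b with _ | _ <;> simp [apply_ite]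

lemma sum_ite_eq_step_some {R : Type*} [AddCommMonoidWithOne R] (x : Fin d → ℤ) :
    ∑ a : Fin d × Bool, (if x = step (some a) then (1 : R) else 0) =
      if ∑ v, |x v| = 1 then 1 else 0 := by
  by_cases h : ∃ a : Fin d × Bool, x = step (some a)
  · rw [if_pos ((sum_abs_eq_one_iff_exists_eq_step x).2 h)]
    obtain ⟨a₀, rfl⟩ := h
    simp_rw [step_some_injective.eq_iff.trans eq_comm]
    simp
  · rw [if_neg ((sum_abs_eq_one_iff_exists_eq_step x).not.2 h)]
    exact sum_eq_zero fun a _ => if_neg (not_exists.1 h a)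

lemma walk_zero (s : Fin k → ASym d) : walk s 0 = 0 := by
  simp [walk]

lemma walk_succ (s : Fin k → ASym d) (j : Fin k) : walk s (j + 1) = walk s j + step (s j) := by
  simp [walk, Finset.sum_range_succ]

lemma walk_cons_succ (a : ASym d) (s : Fin k → ASym d) (j : ℕ) :
    walk (Fin.cons a s : Fin (k + 1) → ASym d) (j + 1) = step a + walk s j := by
  rw [walk, sum_range_succ', dif_pos k.succ_pos, add_comm]
  congr 1
  refine sum_congr rfl fun i _ => ?_
  by_cases hi : i < k
  · rw [dif_pos (by omega), dif_pos hi]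
    exact congrArg step (Fin.cons_succ (α := fun _ => ASym d) a s ⟨i, hi⟩)
  · rw [dif_neg (by omega), dif_neg hi]

lemma abs_walk_sub_walk_le (s : Fin k → ASym d) {i j : ℕ} (hij : i ≤ j) (v : Fin d) :
    |walk s j v - walk s i v| ≤ j - i := by
  have hdiff : walk s j v - walk s i v =
      ∑ l ∈ Ico i j, (if h : l < k then step (s ⟨l, h⟩) else 0) v := by
    rw [sum_Ico_eq_sub _ hij]
    simp [walk, Finset.sum_apply]
  calc |walk s j v - walk s i v|
      ≤ ∑ l ∈ Ico i j, |(if h : l < k then step (s ⟨l, h⟩) else 0) v| :=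
        hdiff ▸ abs_sum_le_sum_abs _ _
    _ ≤ ∑ _l ∈ Ico i j, 1 := sum_le_sum fun l _ => by
        split_ifs
        · exact abs_step_apply_le _ v
        · simp
    _ = j - i := by simp [hij]

/-- The exponent of the weight of the letter `a` read at the site `x`: `X_x` for `V`, `1` for
the hopping letters. -/
noncomputable def stepExponent : ASym d → (Fin d → ℤ) → (Fin d → ℤ) →₀ ℕ
  | none, x => Finsupp.single x 1
  | some _, _ => 0

/-- `φ(s)^x`, the exponent of the weight of the walk `s` started at `x`. -/
noncomputable def shiftedPhi (s : Fin k → ASym d) (x : Fin d → ℤ) : (Fin d → ℤ) →₀ ℕ :=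
  ∑ j : Fin k, stepExponent (s j) (x + walk s j)

lemma shiftedPhi_apply (s : Fin k → ASym d) (x m : Fin d → ℤ) :
    shiftedPhi s x m = phi s (m - x) := by
  rw [shiftedPhi, Finsupp.finsetSum_apply, phi, card_filter]
  refine sum_congr rfl fun j _ => ?_
  rw [walk_succ]
  rcases s j with _ | a
  · simp [stepExponent, Finsupp.single_apply, step, eq_sub_iff_add_eq']
  · refine (if_neg fun ⟨h1, h2⟩ => step_some_ne_zero a ?_).symm
    rwa [h2, add_eq_left] at h1

lemma shiftedPhi_eq_iff (s : Fin k → ASym d) (x : Fin d → ℤ) (β : (Fin d → ℤ) →₀ ℕ) :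
    shiftedPhi s x = β ↔ ∀ n, β n = phi s (n - x) := by
  simp only [Finsupp.ext_iff, shiftedPhi_apply, eq_comm]

lemma shiftedPhi_cons (a : ASym d) (s : Fin k → ASym d) (x : Fin d → ℤ) :
    shiftedPhi (Fin.cons a s : Fin (k + 1) → ASym d) x =
      stepExponent a x + shiftedPhi s (x + step a) := by
  rw [shiftedPhi, Fin.sum_univ_succ]
  congr 1
  · simp [walk_zero]
  · refine sum_congr rfl fun j _ => ?_
    rw [Fin.cons_succ, Fin.val_succ, walk_cons_succ, add_assoc]

lemma exists_add_walk_eq_of_shiftedPhi_pos {s : Fin k → ASym d} {x m : Fin d → ℤ}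
    (h : 0 < shiftedPhi s x m) : ∃ j : Fin k, x + walk s j = m := by
  rw [shiftedPhi_apply, phi, card_pos] at h
  obtain ⟨j, hj⟩ := h
  exact ⟨j, by rw [(mem_filter.1 hj).2.2]; abel⟩

noncomputable def moment : ((Fin d → ℤ) →₀ ℕ) →ₗ[ℕ] Fin d → ℤ :=
  Finsupp.linearCombination ℕ id

lemma moment_shiftedPhi (s : Fin k → ASym d) (x : Fin d → ℤ) :
    moment (shiftedPhi s x) = #{j | s j = none} • x + moment (shiftedPhi s 0) := by
  have hsum : ∀ y, moment (shiftedPhi s y) = ∑ j with s j = none, (y + walk s j) := by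
    intro y
    rw [shiftedPhi, map_sum, sum_filter]
    refine sum_congr rfl fun j _ => ?_
    rcases s j <;> simp [moment, stepExponent]
  simp only [hsum, sum_add_distrib, sum_const, zero_add]

lemma shiftedPhi_eq_zero_of_forall_ne_none {s : Fin k → ASym d} (h : ∀ j, s j ≠ none)
    (x : Fin d → ℤ) : shiftedPhi s x = 0 :=
  sum_eq_zero fun j _ => by
    obtain ⟨a, ha⟩ := Option.ne_none_iff_exists'.1 (h j)
    rw [ha, stepExponent]

lemma eq_of_shiftedPhi_eq {s : Fin k → ASym d} {x x' : Fin d → ℤ}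
    (h : shiftedPhi s x = shiftedPhi s x') (hne : shiftedPhi s x ≠ 0) : x = x' := by
  obtain ⟨j, hj⟩ : ∃ j, s j = none := by
    by_contra! h
    exact hne (shiftedPhi_eq_zero_of_forall_ne_none h x)
  have hcard : #{j | s j = none} ≠ 0 := card_ne_zero_of_mem (mem_filter.2 ⟨mem_univ j, hj⟩)
  have hmoment := congrArg moment h
  rw [moment_shiftedPhi, moment_shiftedPhi s x', add_left_inj] at hmoment
  exact smul_right_injective _ hcard hmoment

variable {L : ℕ}

def InCube (L : ℕ) (x : Fin d → ℤ) : Prop := ∀ v, |x v| ≤ L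

def Cube.val (n : Cube d L) : Fin d → ℤ := fun v => n v

lemma Cube.val_injective : Function.Injective (Cube.val (d := d) (L := L)) :=
  fun _ _ h => funext fun v => Subtype.ext (congrFun h v)

lemma Cube.inCube_val (n : Cube d L) : InCube L n.val :=
  fun v => abs_le.2 (mem_Icc.1 (n v).2)

def Cube.mk {x : Fin d → ℤ} (hx : InCube L x) : Cube d L :=
  fun v => ⟨x v, mem_Icc.2 (abs_le.1 (hx v))⟩

@[simp] lemma Cube.val_mk {x : Fin d → ℤ} (hx : InCube L x) : (Cube.mk hx).val = x := rfl

def WalkInCube (L : ℕ) (x : Fin d → ℤ) (s : Fin k → ASym d) : Prop :=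
  ∀ j ≤ k, InCube L (x + walk s j)

lemma WalkInCube.inCube_start {x : Fin d → ℤ} {s : Fin k → ASym d} (h : WalkInCube L x s) :
    InCube L x := by
  simpa [walk_zero] using h 0 k.zero_le

lemma walkInCube_zero (x : Fin d → ℤ) (s : Fin 0 → ASym d) :
    WalkInCube L x s ↔ InCube L x := by
  refine ⟨WalkInCube.inCube_start, fun h j hj => ?_⟩
  rwa [Nat.le_zero.1 hj, walk_zero, add_zero]

lemma walkInCube_cons (a : ASym d) (s : Fin k → ASym d) (x : Fin d → ℤ) :
    WalkInCube L x (Fin.cons a s : Fin (k + 1) → ASym d) ↔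
      InCube L x ∧ WalkInCube L (x + step a) s := by
  have hshift : ∀ j, x + walk (Fin.cons a s : Fin (k + 1) → ASym d) (j + 1) =
      x + step a + walk s j := fun j => by rw [walk_cons_succ, add_assoc]
  refine ⟨fun h => ⟨h.inCube_start, fun j hj => ?_⟩, fun ⟨h0, h⟩ j hj => ?_⟩
  · rw [← hshift]
    exact h (j + 1) (by omega)
  · rcases j with _ | j
    · rwa [walk_zero, add_zero]
    · rw [hshift]
      exact h j (by omega)

lemma walkInCube_of_add_walk_eq {s : Fin k → ASym d} {x m : Fin d → ℤ} {j₀ : ℕ} (hj₀ : j₀ ≤ k)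
    (hm : x + walk s j₀ = m) (hdeep : ∀ v, |m v| ≤ (L : ℤ) - k) : WalkInCube L x s := by
  intro j hj v
  have hdist : |walk s j v - walk s j₀ v| ≤ k := by
    rcases le_total j₀ j with h | h
    · have := abs_walk_sub_walk_le s h v
      omega
    · have := abs_walk_sub_walk_le s h v
      rw [abs_sub_comm] at this
      omega
  have hx : (x + walk s j) v = m v + (walk s j v - walk s j₀ v) := by
    rw [← hm]
    simp only [Pi.add_apply]
    ring
  rw [hx]
  linarith [abs_add_le (m v) (walk s j v - walk s j₀ v), hdeep v]

noncomputable def stepMatrix (d L : ℕ) (a : ASym d) :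
    Matrix (Cube d L) (Cube d L) (MvPolynomial (Fin d → ℤ) ℝ) := fun n m =>
  if m.val = n.val + step a then monomial (stepExponent a n.val) 1 else 0

lemma sum_stepMatrix (d L : ℕ) : ∑ a, stepMatrix d L a = andersonM d L := by
  refine Matrix.ext fun n m => ?_
  have hV : stepMatrix d L none n m = if n = m then X n.val else 0 := by
    simp only [stepMatrix, stepExponent, step, add_zero, Cube.val_injective.eq_iff,
      eq_comm (a := m)]
    rfl
  have hhop : ∀ a : Fin d × Bool, stepMatrix d L (some a) n m =
      if m.val - n.val = step (some a) then 1 else 0 := fun a => by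
    simp only [stepMatrix, stepExponent, sub_eq_iff_eq_add', monomial_zero', C_1]
  rw [Matrix.sum_apply, Fintype.sum_option, hV, andersonM, add_comm]
  simp only [hhop, sum_ite_eq_step_some]
  congr 3
  exact sum_congr rfl fun v _ => abs_sub_comm _ _

lemma stepMatrix_mul_apply_of_val_eq {a : ASym d}
    {M : Matrix (Cube d L) (Cube d L) (MvPolynomial (Fin d → ℤ) ℝ)} {n m p : Cube d L}
    (hp : p.val = n.val + step a) :
    (stepMatrix d L a * M) n m = monomial (stepExponent a n.val) 1 * M p m := by
  rw [Matrix.mul_apply, sum_eq_single p (fun q _ hq => ?_) (by simp), stepMatrix, if_pos hp]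
  rw [stepMatrix, if_neg (fun hq' => hq (Cube.val_injective (hq'.trans hp.symm))), zero_mul]

lemma stepMatrix_mul_apply_of_not_inCube {a : ASym d}
    {M : Matrix (Cube d L) (Cube d L) (MvPolynomial (Fin d → ℤ) ℝ)} {n m : Cube d L}
    (h : ¬InCube L (n.val + step a)) :
    (stepMatrix d L a * M) n m = 0 := by
  rw [Matrix.mul_apply]
  refine sum_eq_zero fun q _ => ?_
  rw [stepMatrix, if_neg (fun hq => h (by rw [← hq]; exact q.inCube_val)), zero_mul]

lemma andersonM_pow_apply (k : ℕ) (n m : Cube d L) :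
    (andersonM d L ^ k) n m = ∑ s : Fin k → ASym d,
      if m.val = n.val + walk s k ∧ WalkInCube L n.val s
      then monomial (shiftedPhi s n.val) 1 else 0 := by
  induction k generalizing n with
  | zero =>
    simp only [pow_zero, Matrix.one_apply, Fintype.sum_unique, walk_zero, add_zero,
      walkInCube_zero, n.inCube_val, and_true, Cube.val_injective.eq_iff, eq_comm (a := m)]
    simp [shiftedPhi]
  | succ k ih =>
    rw [pow_succ']
    nth_rw 1 [← sum_stepMatrix]
    rw [Matrix.sum_mul, Matrix.sum_apply, sum_pi_fin_succ]
    refine sum_congr rfl fun a _ => ?_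
    simp only [walk_cons_succ, walkInCube_cons, shiftedPhi_cons, ← add_assoc, n.inCube_val,
      true_and]
    by_cases h : InCube L (n.val + step a)
    · rw [stepMatrix_mul_apply_of_val_eq (Cube.val_mk h), ih, Cube.val_mk h, mul_sum]
      refine sum_congr rfl fun s _ => ?_
      rw [mul_ite, mul_zero, monomial_mul, one_mul]
    · rw [stepMatrix_mul_apply_of_not_inCube h]
      exact (sum_eq_zero fun s _ => if_neg fun hs => h hs.2.inCube_start).symm

noncomputable def closedWalks (d L k : ℕ) (β : (Fin d → ℤ) →₀ ℕ) :
    Finset (Cube d L × (Fin k → ASym d)) :=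
  {q | walk q.2 k = 0 ∧ WalkInCube L q.1.val q.2 ∧ shiftedPhi q.2 q.1.val = β}

lemma coeff_trHpow (β : (Fin d → ℤ) →₀ ℕ) :
    coeff β (trHpow d L k) = #(closedWalks d L k β) := by
  simp only [trHpow, Matrix.trace, Matrix.diag, andersonM_pow_apply, coeff_sum, apply_ite (coeff β),
    coeff_monomial, coeff_zero, left_eq_add, closedWalks, card_filter, Fintype.sum_prod_type]
  push_cast
  refine sum_congr rfl fun n _ => sum_congr rfl fun s _ => ?_
  split_ifs <;> simp_all

noncomputable def balancedStrings (d k : ℕ) (β : (Fin d → ℤ) →₀ ℕ) : Finset (Fin k → ASym d) :=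
  {s | walk s k = 0 ∧ ∃ i, shiftedPhi s i = β}

lemma pathCount_eq_card_balancedStrings (β : (Fin d → ℤ) →₀ ℕ) :
    pathCount d k (fun n => β n) = #(balancedStrings d k β) := by
  simp only [pathCount, balancedStrings, shiftedPhi_eq_iff]

variable {β : (Fin d → ℤ) →₀ ℕ}

lemma snd_mem_balancedStrings {q : Cube d L × (Fin k → ASym d)} (hq : q ∈ closedWalks d L k β) :
    q.2 ∈ balancedStrings d k β := by
  obtain ⟨hclosed, -, hφ⟩ := (mem_filter.1 hq).2
  exact mem_filter.2 ⟨mem_univ _, hclosed, _, hφ⟩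

lemma injOn_snd_closedWalks (hβ : β ≠ 0) :
    Set.InjOn Prod.snd (closedWalks d L k β : Set (Cube d L × (Fin k → ASym d))) := by
  rintro ⟨n, s⟩ hq ⟨n', s'⟩ hq' (rfl : s = s')
  obtain ⟨-, -, hφ⟩ := (mem_filter.1 hq).2
  obtain ⟨-, -, hφ'⟩ := (mem_filter.1 hq').2
  simp only at hφ hφ'
  rw [Cube.val_injective (eq_of_shiftedPhi_eq (hφ.trans hφ'.symm) (hφ ▸ hβ))]

lemma card_closedWalks_le (hβ : β ≠ 0) : #(closedWalks d L k β) ≤ #(balancedStrings d k β) :=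
  card_le_card_of_injOn Prod.snd (fun _ hq => snd_mem_balancedStrings hq) (injOn_snd_closedWalks hβ)

lemma card_closedWalks_eq_of_deep (hβ : β ≠ 0) {m : Fin d → ℤ} (hm : 0 < β m)
    (hdeep : ∀ v, |m v| ≤ (L : ℤ) - k) : #(closedWalks d L k β) = #(balancedStrings d k β) := by
  refine card_bij (fun q _ => q.2) (fun _ hq => snd_mem_balancedStrings hq)
    (fun q hq q' hq' => injOn_snd_closedWalks hβ hq hq') fun s hs => ?_
  obtain ⟨hclosed, i, hφ⟩ := (mem_filter.1 hs).2
  obtain ⟨j, hj⟩ := exists_add_walk_eq_of_shiftedPhi_pos (hφ ▸ hm)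
  have hwalk : WalkInCube L i s := walkInCube_of_add_walk_eq j.2.le hj hdeep
  exact ⟨(Cube.mk hwalk.inCube_start, s), mem_filter.2 ⟨mem_univ _, hclosed, hwalk, hφ⟩, rfl⟩

lemma closedWalks_eq_empty_of_not_inCube {m : Fin d → ℤ} (hm : 0 < β m) (hout : ¬InCube L m) :
    closedWalks d L k β = ∅ := by
  refine eq_empty_of_forall_notMem fun q hq => hout ?_
  obtain ⟨-, hwalk, hφ⟩ := (mem_filter.1 hq).2
  obtain ⟨j, hj⟩ := exists_add_walk_eq_of_shiftedPhi_pos (hφ ▸ hm)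
  exact hj ▸ hwalk j j.2.le

end

/-- For a nonzero multi-index `β`, the coefficient `a^k_L(β)` of `X^β` in `Tr(H_L^k)`
satisfies: (1) `0 ≤ a^k_L(β) ≤ p^k(β)`; (2) if `β_n > 0` for some `n ∈ Λ_{L-k}^d` then
`a^k_L(β) = p^k(β)`; (3) if `β_n > 0` for some `n ∉ Λ_L^d` then `a^k_L(β) = 0`. -/
theorem coeff_trace_anderson (d L k : ℕ) (β : (Fin d → ℤ) →₀ ℕ) (hβ : β ≠ 0) :
    (0 ≤ MvPolynomial.coeff β (trHpow d L k) ∧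
      MvPolynomial.coeff β (trHpow d L k) ≤ (pathCount d k (fun n => β n) : ℝ)) ∧
    ((∃ n : Fin d → ℤ, 0 < β n ∧ ∀ v, |n v| ≤ (L : ℤ) - (k : ℤ)) →
      MvPolynomial.coeff β (trHpow d L k) = (pathCount d k (fun n => β n) : ℝ)) ∧
    ((∃ n : Fin d → ℤ, 0 < β n ∧ ¬(∀ v, |n v| ≤ (L : ℤ))) →
      MvPolynomial.coeff β (trHpow d L k) = 0) := by
  rw [coeff_trHpow, pathCount_eq_card_balancedStrings]
  refine ⟨⟨Nat.cast_nonneg _, Nat.cast_le.2 (card_closedWalks_le hβ)⟩, ?_, ?_⟩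
  · rintro ⟨n, hn, hdeep⟩
    rw [card_closedWalks_eq_of_deep hβ hn hdeep]
  · rintro ⟨n, hn, hout⟩
    rw [closedWalks_eq_empty_of_not_inCube hn hout, Finset.card_empty, Nat.cast_zero]
end

section
/- Let q(x) ∈ R[x] be a monic polynomial with distinct real roots a_1,...,a_r, let R = R[Z_1,...,Z_m] and let I ⊂ R be the ideal generated by q(Z_1),...,q(Z_m). If P ∈ R satisfies P ≡ c mod I for some constant c ∈ R, then P(s_1,...,s_m) = c for every s_1,...,s_m ∈ {a_1,...,a_r}. Conversely, if P evaluates to the same constant c at every point of {a_1,...,a_r}^m, then P ≡ c mod I. -/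
/-!
The ideal `I` is the vanishing ideal of the grid `{a_1, …, a_r}^m`. Its generators vanish on the
grid, and conversely Alon's Combinatorial Nullstellensatz writes every polynomial vanishing on the
grid as a combination of the generators `∏ i, (Z_j - a_i)`; distinctness of the `a_i` is what
makes the generators exactly the products over the grid's coordinate sets.
-/

open MvPolynomial

namespace MvPolynomial

variable {R σ : Type*} [CommRing R]

theorem eval_prod_X_sub_C_eq_zero (S : σ → Finset R) {x : σ → R} {i : σ} (hx : x i ∈ S i) :
    eval x (∏ r ∈ S i, (X i - C r)) = 0 := by
  simpa [map_prod, sub_eq_zero] using Finset.prod_eq_zero hx (sub_self (x i))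

theorem mem_span_prod_X_sub_C_iff [IsDomain R] [Finite σ] (S : σ → Finset R)
    (f : MvPolynomial σ R) :
    f ∈ Ideal.span (Set.range fun i => ∏ r ∈ S i, (X i - C r)) ↔
      ∀ x : σ → R, (∀ i, x i ∈ S i) → eval x f = 0 := by
  constructor
  · intro hf x hx
    have hle : Ideal.span (Set.range fun i => ∏ r ∈ S i, (X i - C r)) ≤
        RingHom.ker (eval x) := by
      rw [Ideal.span_le]
      rintro _ ⟨i, rfl⟩
      exact eval_prod_X_sub_C_eq_zero S (hx i)
    exact hle hf
  · intro hf
    by_cases hS : ∀ i, (S i).Nonempty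
    · obtain ⟨h, -, rfl⟩ := combinatorial_nullstellensatz_exists_linearCombination S hS f hf
      rw [Ideal.span, ← Finsupp.range_linearCombination]
      exact LinearMap.mem_range_self _ h
    · obtain ⟨i, hi⟩ := not_forall.mp hS
      have hone : (1 : MvPolynomial σ R) ∈
          Ideal.span (Set.range fun i => ∏ r ∈ S i, (X i - C r)) := by
        simpa [Finset.not_nonempty_iff_eq_empty.mp hi] using
          Ideal.subset_span (Set.mem_range_self (f := fun i => ∏ r ∈ S i, (X i - C r)) i)
      rw [(Ideal.eq_top_iff_one _).mpr hone]
      exact Submodule.mem_top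

end MvPolynomial

/-- Let `q(x) = ∏_{i=1}^r (x - a_i)` with distinct real roots, and let
`I = (q(Z_1), ..., q(Z_m)) ⊂ ℝ[Z_1,...,Z_m]`. Then `P ≡ c mod I` if and only if `P` evaluates
to `c` at every point of `{a_1,...,a_r}^m`. -/
theorem mem_span_iff_eval_const (m r : ℕ) (a : Fin r → ℝ) (ha : Function.Injective a)
    (P : MvPolynomial (Fin m) ℝ) (c : ℝ) :
    P - C c ∈ Ideal.span (Set.range fun j : Fin m => ∏ i : Fin r, (X j - C (a i))) ↔
      ∀ s : Fin m → Fin r, eval (fun j => a (s j)) P = c := by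
  have hprod (j : Fin m) :
      ∏ i : Fin r, (X j - C (a i)) = ∏ t ∈ Finset.univ.image a, (X j - C t) :=
    (Finset.prod_image (f := fun t => X j - C t) fun i _ i' _ h => ha h).symm
  simp_rw [hprod, mem_span_prod_X_sub_C_iff, map_sub, eval_C, sub_eq_zero, Finset.mem_image,
    Finset.mem_univ, true_and]
  constructor
  · exact fun h s => h _ fun j => ⟨s j, rfl⟩
  · intro h x hx
    choose s hs using hx
    simpa [hs] using h s
end

section
/- Let P ∈ R[x_1,...,x_m] be a nonconstant multivariate polynomial and let S ⊆ R be a set such that P(s_1,...,s_m) = P(t_1,...,t_m) for all s_i, t_i ∈ S (i.e., P is constant on S^m). Then |S| ≤ deg(P), where deg is total degree. Equivalently: if P vanishes on S^m and P ≠ 0, then |S| ≤ deg(P). -/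
open MvPolynomial

lemma aux_grid : ∀ (m : ℕ) (Q : MvPolynomial (Fin m) ℝ) (T : Finset ℝ), Q ≠ 0 →
    (∀ i, Q.degreeOf i < T.card) →
    ∃ x : Fin m → ℝ, (∀ i, x i ∈ T) ∧ eval x Q ≠ 0 := by
  intro m
  induction m with
  | zero =>
    intro Q T hQ _
    obtain ⟨c, rfl⟩ := MvPolynomial.C_surjective (Fin 0) Q
    refine ⟨Fin.elim0, fun i => i.elim0, ?_⟩
    simpa using fun h => hQ (by rw [h, map_zero])
  | succ n ih =>
    intro Q T hQ hdeg
    set F := finSuccEquiv ℝ n Q with hF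
    have hF0 : F ≠ 0 := by
      simp only [hF, ne_eq, EmbeddingLike.map_eq_zero_iff]
      exact hQ
    have hlead : F.coeff F.natDegree ≠ 0 := Polynomial.leadingCoeff_ne_zero.mpr hF0
    have hdeg' : ∀ i : Fin n, (F.coeff F.natDegree).degreeOf i < T.card :=
      fun i => lt_of_le_of_lt (degreeOf_coeff_finSuccEquiv Q i F.natDegree) (hdeg i.succ)
    obtain ⟨y, hyT, hy⟩ := ih (F.coeff F.natDegree) T hlead hdeg'
    set p : Polynomial ℝ := F.map (eval y) with hp
    have hp0 : p ≠ 0 := fun h => hy (by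
      have h2 : p.coeff F.natDegree = eval y (F.coeff F.natDegree) :=
        Polynomial.coeff_map (eval y) F.natDegree
      rw [h, Polynomial.coeff_zero] at h2
      exact h2.symm)
    have hpd : p.natDegree < T.card := by
      calc p.natDegree ≤ F.natDegree := Polynomial.natDegree_map_le
        _ = Q.degreeOf 0 := natDegree_finSuccEquiv Q
        _ < T.card := hdeg 0
    have : ∃ t ∈ T, Polynomial.eval t p ≠ 0 := by
      by_contra h
      push_neg at h
      have hsub : T ⊆ p.roots.toFinset := by
        intro t ht
        rw [Multiset.mem_toFinset, Polynomial.mem_roots hp0]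
        exact h t ht
      have := Finset.card_le_card hsub
      have h2 : p.roots.toFinset.card ≤ p.natDegree :=
        le_trans (Multiset.toFinset_card_le _) (Polynomial.card_roots' p)
      omega
    obtain ⟨t, htT, ht⟩ := this
    refine ⟨Fin.cons t y, ?_, ?_⟩
    · intro i
      refine Fin.cases htT (fun j => ?_) i
      simpa using hyT j
    · rw [eval_eq_eval_mv_eval']
      exact ht

/-- If `P ∈ ℝ[x_1,...,x_m]` is a nonconstant polynomial which takes the same value at all
points of `S^m`, then `|S| ≤ deg(P)` (total degree), in the sense that every finite subset of
`S` has cardinality at most `deg(P)`. -/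
theorem card_le_totalDegree_of_const_on (m : ℕ) (P : MvPolynomial (Fin m) ℝ)
    (hP : ∀ c : ℝ, P ≠ C c) (S : Set ℝ)
    (hconst : ∀ s t : Fin m → ℝ, (∀ i, s i ∈ S) → (∀ i, t i ∈ S) →
      eval s P = eval t P) :
    ∀ T : Finset ℝ, ↑T ⊆ S → T.card ≤ P.totalDegree := by
  intro T hTS
  rcases T.eq_empty_or_nonempty with rfl | ⟨t0, ht0⟩
  · simp
  have ht0S : t0 ∈ S := hTS ht0
  set c := eval (fun _ => t0) P with hc
  set Q := P - C c with hQdef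
  have hQ0 : Q ≠ 0 := fun h => hP c (by rw [← sub_eq_zero]; exact h)
  by_contra hlt
  push_neg at hlt
  have hdeg : ∀ i, Q.degreeOf i < T.card := fun i =>
    lt_of_le_of_lt (le_trans (degreeOf_le_totalDegree Q i)
      (le_trans (totalDegree_sub_C_le P c) (le_refl _))) hlt
  obtain ⟨x, hxT, hx⟩ := aux_grid m Q T hQ0 hdeg
  apply hx
  have hxS : ∀ i, x i ∈ S := fun i => hTS (hxT i)
  have : eval x P = c := hconst x (fun _ => t0) hxS (fun _ => ht0S)
  simp [hQdef, this]
end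

section
/- Let (X_n)_{n∈Z^d} be i.i.d. random variables with all moments finite, let B be a set of multi-indices with β_0 > 0 for each β ∈ B, and let (a_β)_{β∈B} be real coefficients, all but finitely many zero. Define Y_i = Σ_{β∈B} a_β (X^{β^i} − E[X^{β^i}]) for i ∈ Z^d. Then there exists m ∈ N such that the array (Y_i)_{i∈Z^d} is identically distributed and m-dependent, with E[Y_i] = 0 and E[|Y_i|³] < ∞. -/
/-!
Let `T` be the union of the supports of the multi-indices `β` with `a_β ≠ 0`. Then `Y_i` is one
fixed polynomial, centred by its mean, in the window `(X_{n+i})_{n ∈ T}`. The shifted field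
`(X_{n+i})_n` has the same law for every `i`, namely the infinite product of the common marginal;
hence the centring constants and the law of `Y_i` do not depend on `i`. If the `ℓ¹`-diameter of `T`
is at most `m`, then for index sets `I`, `J` at distance `> m` the windows `T + I` and `T + J` are
disjoint, so `(Y_i)_{i∈I}` and `(Y_j)_{j∈J}` are measurable with respect to the σ-algebras of two
disjoint subfamilies of the independent `X_n`. Finally, Hölder's inequality shows that monomials in
variables with all moments finite again have all moments finite.
-/

open MeasureTheory ProbabilityTheory
open scoped Pointwise

/-- The array `(Y_i)_{i∈ℤ^d}` is `m`-dependent: for any two finite index sets `I, J` at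
`ℓ¹`-distance greater than `m` from each other, the families `(Y_i)_{i∈I}` and `(Y_j)_{j∈J}`
are independent. -/
def MDependent {d : ℕ} {Ω : Type*} [MeasurableSpace Ω] (μ : Measure Ω) (m : ℕ)
    (Y : (Fin d → ℤ) → Ω → ℝ) : Prop :=
  ∀ I J : Finset (Fin d → ℤ),
    (∀ i ∈ I, ∀ j ∈ J, (m : ℤ) < ∑ v : Fin d, |i v - j v|) →
    IndepFun (fun ω (i : I) => Y i ω) (fun ω (j : J) => Y j ω) μ

namespace MeasureTheory

variable {Ω ι : Type*} {mΩ : MeasurableSpace Ω} {μ : Measure Ω}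

lemma measurable_iSup_comap_of_mem {E : Type*} [mE : MeasurableSpace E] {X : ι → Ω → E}
    {S : Set ι} {n : ι} (hn : n ∈ S) : Measurable[⨆ k ∈ S, mE.comap (X k)] (X n) :=
  (comap_measurable (X n)).mono (le_iSup₂ (f := fun k _ ↦ mE.comap (X k)) n hn) le_rfl

lemma memLp_of_integrable_abs_pow {f : Ω → ℝ} (hf : AEStronglyMeasurable f μ)
    (h : ∀ k : ℕ, Integrable (fun ω ↦ |f ω| ^ k) μ) (p : ℕ) : MemLp f p μ := by
  rcases eq_or_ne p 0 with rfl | hp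
  · simpa using hf
  rw [← integrable_norm_rpow_iff hf (by exact_mod_cast hp) (by simp)]
  simpa [Real.rpow_natCast] using h p

lemma memLp_mul_of_forall {f g : Ω → ℝ} (hf : ∀ p : ℕ, MemLp f p μ)
    (hg : ∀ p : ℕ, MemLp g p μ) (p : ℕ) : MemLp (f * g) p μ := by
  have : ENNReal.HolderTriple (2 * p : ℕ) (2 * p : ℕ) p := ⟨by
    push_cast
    rw [ENNReal.mul_inv (by simp) (by simp), ← add_mul, ENNReal.inv_two_add_inv_two, one_mul]⟩
  exact (hg (2 * p)).mul (hf (2 * p))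

variable [IsFiniteMeasure μ]

lemma memLp_prod_of_forall {f : ι → Ω → ℝ} (s : Finset ι)
    (hf : ∀ i ∈ s, ∀ p : ℕ, MemLp (f i) p μ) (p : ℕ) :
    MemLp (fun ω ↦ ∏ i ∈ s, f i ω) p μ := by
  rw [← Finset.prod_fn]
  revert p
  exact Finset.prod_induction _ (fun g ↦ ∀ p : ℕ, MemLp g p μ)
    (fun _ _ ↦ memLp_mul_of_forall) (fun _ ↦ memLp_const 1) hf

lemma memLp_pow_of_forall {f : Ω → ℝ} (hf : ∀ p : ℕ, MemLp f p μ) (k p : ℕ) :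
    MemLp (fun ω ↦ f ω ^ k) p μ := by
  simpa using memLp_prod_of_forall (Finset.range k) (fun _ _ ↦ hf) p

lemma memLp_monomial {V : Ω → ι → ℝ} (hV : ∀ n (p : ℕ), MemLp (fun ω ↦ V ω n) p μ)
    (β : ι →₀ ℕ) (p : ℕ) : MemLp (fun ω ↦ ∏ n ∈ β.support, V ω n ^ β n) p μ :=
  memLp_prod_of_forall _ (fun n _ ↦ memLp_pow_of_forall (hV n) _) p

end MeasureTheory

namespace ProbabilityTheory

variable {Ω ι : Type*} {mΩ : MeasurableSpace Ω} {μ : Measure Ω}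

lemma iIndepFun.identDistrib_shift {E : Type*} [MeasurableSpace E] [Countable ι] [Add ι]
    [IsRightCancelAdd ι] {X : ι → Ω → E} (hX : iIndepFun X μ)
    (hid : ∀ n m, IdentDistrib (X n) (X m) μ μ) (i j : ι) :
    IdentDistrib (fun ω n ↦ X (n + i) ω) (fun ω n ↦ X (n + j) ω) μ μ :=
  IdentDistrib.pi (fun _ ↦ hid _ _) (hX.precomp (add_left_injective i))
    (hX.precomp (add_left_injective j))

lemma iIndepFun.indepFun_of_measurable_iSup {E F G : Type*} [mE : MeasurableSpace E]
    [MeasurableSpace F] [MeasurableSpace G] {X : ι → Ω → E} (hX : iIndepFun X μ)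
    (hmeas : ∀ n, Measurable (X n)) {S T : Set ι} (hST : Disjoint S T) {f : Ω → F} {g : Ω → G}
    (hf : Measurable[⨆ n ∈ S, mE.comap (X n)] f) (hg : Measurable[⨆ n ∈ T, mE.comap (X n)] g) :
    IndepFun f g μ := by
  rw [IndepFun_iff_Indep]
  exact indep_of_indep_of_le
    (indep_iSup_of_disjoint (fun n ↦ (hmeas n).comap_le) hX.iIndep hST) hf.comap_le hg.comap_le

noncomputable def centredPolynomial (μ : Measure Ω) (a : (ι →₀ ℕ) →₀ ℝ) (V : Ω → ι → ℝ) :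
    Ω → ℝ :=
  fun ω ↦ ∑ β ∈ a.support, a β *
    (∏ n ∈ β.support, V ω n ^ β n - ∫ ω', ∏ n ∈ β.support, V ω' n ^ β n ∂μ)

variable (a : (ι →₀ ℕ) →₀ ℝ) {V : Ω → ι → ℝ}

lemma measurable_centredPolynomial {m : MeasurableSpace Ω}
    (hV : ∀ β ∈ a.support, ∀ n ∈ β.support, Measurable[m] fun ω ↦ V ω n) :
    Measurable[m] (centredPolynomial μ a V) := by
  unfold centredPolynomial
  exact Finset.measurable_sum _ fun β hβ ↦ ((Finset.measurable_prod _ fun n hn ↦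
    (hV β hβ n hn).pow_const _).sub_const _).const_mul _

lemma IdentDistrib.centredPolynomial {Ω' : Type*} [MeasurableSpace Ω'] {ν : Measure Ω'}
    {W : Ω' → ι → ℝ} (h : IdentDistrib V W μ ν) :
    IdentDistrib (centredPolynomial μ a V) (centredPolynomial ν a W) μ ν := by
  have hmonomial (β : ι →₀ ℕ) : Measurable fun x : ι → ℝ ↦ ∏ n ∈ β.support, x n ^ β n := by
    fun_prop
  have hmean (β : ι →₀ ℕ) : ∫ ω, ∏ n ∈ β.support, V ω n ^ β n ∂μ =
      ∫ ω, ∏ n ∈ β.support, W ω n ^ β n ∂ν :=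
    (h.comp (hmonomial β)).integral_eq
  unfold ProbabilityTheory.centredPolynomial
  simp only [hmean]
  exact h.comp (u := fun x : ι → ℝ ↦ ∑ β ∈ a.support, a β * (∏ n ∈ β.support, x n ^ β n -
    ∫ ω, ∏ n ∈ β.support, W ω n ^ β n ∂ν)) (by fun_prop)

lemma memLp_centredPolynomial [IsFiniteMeasure μ]
    (hV : ∀ n (p : ℕ), MemLp (fun ω ↦ V ω n) p μ) (p : ℕ) :
    MemLp (centredPolynomial μ a V) p μ :=
  memLp_finsetSum _ fun β _ ↦
    ((memLp_monomial hV β p).sub (memLp_const _)).const_mul _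

lemma integral_centredPolynomial [IsProbabilityMeasure μ]
    (hV : ∀ β ∈ a.support, Integrable (fun ω ↦ ∏ n ∈ β.support, V ω n ^ β n) μ) :
    ∫ ω, centredPolynomial μ a V ω ∂μ = 0 := by
  unfold centredPolynomial
  rw [integral_finsetSum (f := fun β ω ↦ a β * (∏ n ∈ β.support, V ω n ^ β n -
    ∫ ω', ∏ n ∈ β.support, V ω' n ^ β n ∂μ)) _ fun β hβ ↦
      ((hV β hβ).sub (integrable_const _)).const_mul _]
  refine Finset.sum_eq_zero fun β hβ ↦ ?_
  rw [integral_const_mul, integral_sub (hV β hβ) (integrable_const _), integral_const]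
  simp

end ProbabilityTheory

lemma exists_sum_abs_sub_le {d : ℕ} (T : Finset (Fin d → ℤ)) :
    ∃ m : ℕ, ∀ n ∈ T, ∀ n' ∈ T, ∑ v, |n v - n' v| ≤ m := by
  obtain ⟨M, hM⟩ := ((T ×ˢ T).image fun p ↦ ∑ v, |p.1 v - p.2 v|).exists_le
  refine ⟨M.toNat, fun n hn n' hn' ↦ ?_⟩
  have h := hM _ (Finset.mem_image_of_mem _ (Finset.mk_mem_product hn hn'))
  exact h.trans (Int.self_le_toNat M)

lemma disjoint_add_of_diam_lt {d : ℕ} {T I J : Set (Fin d → ℤ)} {m : ℤ}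
    (hT : ∀ n ∈ T, ∀ n' ∈ T, ∑ v, |n v - n' v| ≤ m)
    (hIJ : ∀ i ∈ I, ∀ j ∈ J, m < ∑ v, |i v - j v|) : Disjoint (T + I) (T + J) := by
  rw [Set.disjoint_left]
  rintro _ ⟨n, hn, i, hi, rfl⟩ ⟨n', hn', j, hj, h⟩
  have hdiff (v : Fin d) : i v - j v = n' v - n v := by
    have := congrFun h v
    simp only [Pi.add_apply] at this
    omega
  have := hIJ i hi j hj
  simp only [hdiff] at this
  linarith [hT n' hn' n hn]

theorem linear_statistic_array_mDependent_general {d : ℕ} {Ω : Type*} [MeasurableSpace Ω]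
    (μ : Measure Ω) [IsProbabilityMeasure μ]
    (X : (Fin d → ℤ) → Ω → ℝ) (hmeas : ∀ n, Measurable (X n))
    (hindep : iIndepFun X μ)
    (hid : ∀ n m, μ.map (X n) = μ.map (X m))
    (hmom : ∀ n k, Integrable (fun ω => |X n ω| ^ k) μ)
    (a : ((Fin d → ℤ) →₀ ℕ) →₀ ℝ)
    (Y : (Fin d → ℤ) → Ω → ℝ)
    (hY : ∀ i ω, Y i ω = ∑ β ∈ a.support, a β *
      ((∏ n ∈ β.support, X (n + i) ω ^ β n) -
        ∫ ω', ∏ n ∈ β.support, X (n + i) ω' ^ β n ∂μ)) :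
    ∃ m : ℕ, MDependent μ m Y ∧ (∀ i j, μ.map (Y i) = μ.map (Y j)) ∧
      (∀ i, ∫ ω, Y i ω ∂μ = 0) ∧ ∀ i, Integrable (fun ω => |Y i ω| ^ 3) μ := by
  have hYV (i) : Y i = centredPolynomial μ a fun ω n ↦ X (n + i) ω := funext (hY i)
  have hmomV (i n) (p : ℕ) : MemLp (fun ω ↦ X (n + i) ω) p μ :=
    memLp_of_integrable_abs_pow (hmeas _).aestronglyMeasurable (hmom _) p
  set T := a.support.biUnion Finsupp.support
  have hmeasY (I : Finset (Fin d → ℤ)) :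
      Measurable[⨆ n ∈ (T : Set (Fin d → ℤ)) + (I : Set (Fin d → ℤ)),
        MeasurableSpace.comap (X n) inferInstance] fun ω (i : I) ↦ Y i ω := by
    -- make the sub-σ-algebra the ambient instance, as `measurable_pi_lambda` expects
    let := ⨆ n ∈ (T : Set (Fin d → ℤ)) + (I : Set (Fin d → ℤ)),
      MeasurableSpace.comap (X n) inferInstance
    refine measurable_pi_lambda _ fun i ↦ hYV i ▸ measurable_centredPolynomial a fun β hβ n hn ↦
      measurable_iSup_comap_of_mem (Set.add_mem_add (Finset.mem_biUnion.2 ⟨β, hβ, hn⟩) i.2)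
  obtain ⟨m, hm⟩ := exists_sum_abs_sub_le T
  refine ⟨m, fun I J hIJ ↦ ?_, fun i j ↦ ?_, fun i ↦ ?_, fun i ↦ ?_⟩
  · exact hindep.indepFun_of_measurable_iSup hmeas (disjoint_add_of_diam_lt hm hIJ)
      (hmeasY I) (hmeasY J)
  · have hXid (n n') : IdentDistrib (X n) (X n') μ μ :=
      ⟨(hmeas n).aemeasurable, (hmeas n').aemeasurable, hid n n'⟩
    rw [hYV, hYV]
    exact ((hindep.identDistrib_shift hXid i j).centredPolynomial a).map_eq
  · rw [hYV]
    exact integral_centredPolynomial a fun β _ ↦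
      memLp_one_iff_integrable.1 (by exact_mod_cast memLp_monomial (hmomV i) β 1)
  · rw [hYV]
    simpa using (memLp_centredPolynomial a (hmomV i) 3).integrable_norm_pow (by norm_num)

/-- Let `(X_n)_{n∈ℤ^d}` be i.i.d. with all moments finite, and let `a` be a finitely supported
real coefficient function on multi-indices, supported on multi-indices `β` with `β_0 > 0`.
Then `Y_i = Σ_β a_β (X^{β^i} − E[X^{β^i}])` defines an identically distributed `m`-dependent
array (for some `m`) with mean zero and finite third moments. -/
theorem linear_statistic_array_mDependent {d : ℕ} {Ω : Type*} [MeasurableSpace Ω]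
    (μ : Measure Ω) [IsProbabilityMeasure μ]
    (X : (Fin d → ℤ) → Ω → ℝ) (hmeas : ∀ n, Measurable (X n))
    (hindep : iIndepFun X μ)
    (hid : ∀ n m, μ.map (X n) = μ.map (X m))
    (hmean : ∀ n, ∫ ω, X n ω ∂μ = 0)
    (hmom : ∀ n k, Integrable (fun ω => |X n ω| ^ k) μ)
    (a : ((Fin d → ℤ) →₀ ℕ) →₀ ℝ) (hB : ∀ β ∈ a.support, 0 < β 0)
    (Y : (Fin d → ℤ) → Ω → ℝ)
    (hY : ∀ i ω, Y i ω = ∑ β ∈ a.support, a β *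
      ((∏ n ∈ β.support, X (n + i) ω ^ β n) -
        ∫ ω', ∏ n ∈ β.support, X (n + i) ω' ^ β n ∂μ)) :
    ∃ m : ℕ, MDependent μ m Y ∧ (∀ i j, μ.map (Y i) = μ.map (Y j)) ∧
      (∀ i, ∫ ω, Y i ω ∂μ = 0) ∧ ∀ i, Integrable (fun ω => |Y i ω| ^ 3) μ :=
  linear_statistic_array_mDependent_general μ X hmeas hindep hid hmom a Y hY
end
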